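/- arXiv:2408.02403 — 2 statements merged into one kernel-verified Lean document; each statement's English description precedes it below -/
import Mathlib

section
/- Let $a_0 > 0$, $a \ge 0$, and $a_1,\dots,a_n \in [0,a]$ be nonnegative reals. Then $\sum_{i=1}^n \frac{a_i}{a_0 + \sum_{j=1}^{i-1} a_j} \le 2 + \frac{4a}{a_0} + 2\log\left(1 + \sum_{i=1}^{n-1} \frac{a_i}{a_0}\right)$. -/
/-!
With partial sums `S₀ = a₀` and `Sᵢ = Sᵢ₋₁ + aᵢ`, each term satisfies
`aᵢ / Sᵢ₋₁ ≤ Φ(Sᵢ) - Φ(Sᵢ₋₁)` for the potential `Φ(t) = log t - a / t`: indeed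
`x / s = x / (s + x) + x² / (s (s + x))`, the first summand is at most `log ((s + x) / s)`
and the second at most `a / s - a / (s + x)` because `x ≤ a`. Telescoping the first `n - 1`
terms and bounding the last one by `a / Sₙ₋₁` gives the sharper bound `a / a₀ + log (Sₙ₋₁ / a₀)`.
-/

open Finset Real

noncomputable def logPotential (a t : ℝ) : ℝ := log t - a / t

lemma div_le_logPotential_sub {a s x : ℝ} (hs : 0 < s) (hx : 0 ≤ x) (hxa : x ≤ a) :
    x / s ≤ logPotential a (s + x) - logPotential a s := by
  have hsx : 0 < s + x := by linarith
  have hlog : x / (s + x) ≤ log (s + x) - log s := by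
    have h := one_sub_inv_le_log_of_pos (div_pos hsx hs)
    rw [log_div hsx.ne' hs.ne', inv_div] at h
    have h1 : 1 - s / (s + x) = x / (s + x) := by field_simp; ring
    linarith
  have hsq : x * x / (s * (s + x)) ≤ a / s - a / (s + x) := by
    have h : a / s - a / (s + x) = a * x / (s * (s + x)) := by field_simp; ring
    rw [h]
    gcongr
  have hsplit : x / s = x / (s + x) + x * x / (s * (s + x)) := by field_simp
  unfold logPotential
  linarith

lemma sum_div_partialSum_le {a a0 : ℝ} (ha0 : 0 < a0) (f : ℕ → ℝ) :
    ∀ m : ℕ, (∀ i ∈ Icc 1 m, 0 ≤ f i ∧ f i ≤ a) →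
      ∑ i ∈ Icc 1 m, f i / (a0 + ∑ j ∈ Icc 1 (i - 1), f j) ≤
        logPotential a (a0 + ∑ j ∈ Icc 1 m, f j) - logPotential a a0
  | 0, _ => by simp
  | m + 1, hf => by
    have hfm := hf (m + 1) (right_mem_Icc.mpr (Nat.le_add_left 1 m))
    have hS : 0 < a0 + ∑ j ∈ Icc 1 m, f j :=
      add_pos_of_pos_of_nonneg ha0 (sum_nonneg fun j hj => (hf j (Icc_subset_Icc_right m.le_succ hj)).1)
    have ih := sum_div_partialSum_le ha0 f m fun i hi => hf i (Icc_subset_Icc_right m.le_succ hi)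
    have hstep := div_le_logPotential_sub hS hfm.1 hfm.2
    rw [sum_Icc_succ_top (Nat.le_add_left 1 m), sum_Icc_succ_top (Nat.le_add_left 1 m),
      Nat.add_sub_cancel, ← add_assoc]
    linarith

lemma sum_div_partialSum_le_div_add_log {a a0 : ℝ} (ha0 : 0 < a0) (f : ℕ → ℝ) (m : ℕ)
    (hf : ∀ i ∈ Icc 1 (m + 1), 0 ≤ f i ∧ f i ≤ a) :
    ∑ i ∈ Icc 1 (m + 1), f i / (a0 + ∑ j ∈ Icc 1 (i - 1), f j) ≤
      a / a0 + log ((a0 + ∑ j ∈ Icc 1 m, f j) / a0) := by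
  have hhead := sum_div_partialSum_le ha0 f m fun i hi => hf i (Icc_subset_Icc_right m.le_succ hi)
  rw [sum_Icc_succ_top (Nat.le_add_left 1 m), Nat.add_sub_cancel]
  set S := a0 + ∑ j ∈ Icc 1 m, f j
  have hS : 0 < S :=
    add_pos_of_pos_of_nonneg ha0 (sum_nonneg fun j hj => (hf j (Icc_subset_Icc_right m.le_succ hj)).1)
  have hlast : f (m + 1) / S ≤ a / S :=
    div_le_div_of_nonneg_right (hf (m + 1) (right_mem_Icc.mpr (Nat.le_add_left 1 m))).2 hS.le
  rw [log_div hS.ne' ha0.ne']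
  unfold logPotential at hhead
  linarith

theorem stmt_1 (n : ℕ) (a0 a : ℝ) (ha0 : 0 < a0) (ha : 0 ≤ a)
    (f : ℕ → ℝ) (hf : ∀ i ∈ Finset.Icc 1 n, 0 ≤ f i ∧ f i ≤ a) :
    ∑ i ∈ Finset.Icc 1 n, f i / (a0 + ∑ j ∈ Finset.Icc 1 (i - 1), f j) ≤
      2 + 4 * a / a0 + 2 * Real.log (1 + ∑ i ∈ Finset.Icc 1 (n - 1), f i / a0) := by
  cases n with
  | zero => simp; positivity
  | succ m =>
    have hbound := sum_div_partialSum_le_div_add_log ha0 f m hf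
    have hsum_nonneg : 0 ≤ ∑ j ∈ Icc 1 m, f j / a0 :=
      sum_nonneg fun j hj => div_nonneg (hf j (Icc_subset_Icc_right m.le_succ hj)).1 ha0.le
    have hratio : (a0 + ∑ j ∈ Icc 1 m, f j) / a0 = 1 + ∑ j ∈ Icc 1 m, f j / a0 := by
      rw [add_div, div_self ha0.ne', sum_div]
    have hlog_nonneg : 0 ≤ log (1 + ∑ j ∈ Icc 1 m, f j / a0) := log_nonneg (by linarith)
    have ha_div : 0 ≤ a / a0 := div_nonneg ha ha0.le
    rw [Nat.add_sub_cancel, mul_div_assoc]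
    rw [hratio] at hbound
    linarith
end

section
/- With notation as in the seeded PACE algorithm (seed $\xi > 0$, values bounded by $\|v\|_\infty$, budgets $B_i > 0$ with $\sum_i B_i = 1$, realized utilities $U_i$, and any feasible competing allocation with utilities $\widetilde U_i$): $\sum_{i=1}^n B_i \frac{\widetilde U_i + \xi}{U_i + \xi} \le 3 + \frac{4\|v\|_\infty}{\xi} + 2\log\left(1 + \frac{\|v\|_\infty}{\xi}\right) + 2\log t$. -/
open Finset

private lemma key_ineq18 (c a V : ℝ) (hc : 0 < c) (ha : 0 ≤ a) (haV : a ≤ V) :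
    a / c ≤ (Real.log (c + a) - Real.log c) + (V / c - V / (c + a)) := by
  have hca : 0 < c + a := by linarith
  have h1 : a / (c + a) ≤ Real.log (c + a) - Real.log c := by
    have h := Real.log_le_sub_one_of_pos (show (0:ℝ) < c / (c + a) by positivity)
    rw [Real.log_div hc.ne' hca.ne'] at h
    have h2 : c / (c + a) - 1 = -(a / (c + a)) := by field_simp; ring
    linarith
  have e1 : a / c - a / (c + a) = a * a / (c * (c + a)) := by field_simp; ring
  have e2 : V / c - V / (c + a) = V * a / (c * (c + a)) := by field_simp; ring
  have h3 : a * a / (c * (c + a)) ≤ V * a / (c * (c + a)) := by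
    apply div_le_div_of_nonneg_right ?_ (by positivity)
    exact mul_le_mul_of_nonneg_right haV ha
  linarith

theorem stmt_18 (n t : ℕ) (ht : 1 ≤ t) (ξ Vmax : ℝ) (hξ : 0 < ξ)
    (v : Fin n → ℕ → ℝ) (hv : ∀ i τ, 0 ≤ v i τ ∧ v i τ ≤ Vmax)
    (B : Fin n → ℝ) (hB : ∀ i, 0 < B i) (hBsum : ∑ i, B i = 1)
    (sel : ℕ → Fin n) (u : Fin n → ℕ → ℝ) (Uc : Fin n → ℕ → ℝ)
    (hu : ∀ i τ, u i τ = if i = sel τ then v i τ else 0)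
    (hU : ∀ i τ, Uc i τ = ∑ s ∈ Finset.Icc 1 τ, u i s)
    (hsel : ∀ τ ∈ Finset.Icc 1 t, ∀ i,
      B i * v i τ / (Uc i (τ - 1) + ξ) ≤ B (sel τ) * v (sel τ) τ / (Uc (sel τ) (τ - 1) + ξ))
    (x : Fin n → ℕ → ℝ) (hx : ∀ i τ, 0 ≤ x i τ) (hfeas : ∀ τ, ∑ i, x i τ ≤ 1) :
    ∑ i, B i * ((∑ τ ∈ Finset.Icc 1 t, x i τ * v i τ + ξ) / (Uc i t + ξ)) ≤
      3 + 4 * Vmax / ξ + 2 * Real.log (1 + Vmax / ξ) + 2 * Real.log t := by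
  have i₀ : Fin n := sel 0
  have hV0 : 0 ≤ Vmax := le_trans (hv i₀ 0).1 (hv i₀ 0).2
  have hu0 : ∀ i τ, 0 ≤ u i τ := by
    intro i τ; rw [hu]; split
    · exact (hv i τ).1
    · exact le_refl 0
  have huV : ∀ i τ, u i τ ≤ Vmax := by
    intro i τ; rw [hu]; split
    · exact (hv i τ).2
    · exact hV0
  have hUc0 : ∀ i τ, 0 ≤ Uc i τ := by
    intro i τ; rw [hU]; exact Finset.sum_nonneg fun s _ => hu0 i s
  have hden : ∀ i τ, 0 < Uc i τ + ξ := fun i τ => by linarith [hUc0 i τ]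
  have hmono : ∀ i (τ τ' : ℕ), τ ≤ τ' → Uc i τ ≤ Uc i τ' := by
    intro i τ τ' h; rw [hU, hU]
    exact Finset.sum_le_sum_of_subset_of_nonneg (Finset.Icc_subset_Icc_right h)
      (fun s _ _ => hu0 i s)
  have hstep : ∀ i s, Uc i (s + 1) = Uc i s + u i (s + 1) := by
    intro i s
    rw [hU, hU, Finset.sum_Icc_succ_top (Nat.succ_le_succ (Nat.zero_le s))]
  set φ : Fin n → ℕ → ℝ := fun i τ => Real.log (Uc i τ + ξ) - Vmax / (Uc i τ + ξ) with hφ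
  set F : ℕ → ℝ := fun τ => ∑ i, B i * φ i τ with hF
  set g : ℕ → ℝ := fun τ => B (sel τ) * v (sel τ) τ / (Uc (sel τ) (τ - 1) + ξ) with hg
  have hg0 : ∀ τ, 0 ≤ g τ :=
    fun τ => div_nonneg (mul_nonneg (hB _).le (hv _ _).1) (hden _ _).le
  -- per-round potential increase
  have hround : ∀ s : ℕ, g (s + 1) ≤ F (s + 1) - F s := by
    intro s
    have hFd : F (s + 1) - F s = ∑ i, B i * (φ i (s + 1) - φ i s) := by
      rw [hF]
      simp only [← Finset.sum_sub_distrib, mul_sub]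
    rw [hFd]
    have hzero : ∀ i, i ≠ sel (s + 1) → B i * (φ i (s + 1) - φ i s) = 0 := by
      intro i hi
      have hUeq : Uc i (s + 1) = Uc i s := by
        rw [hstep i s, hu]; simp [hi]
      simp [hφ, hUeq]
    rw [Fintype.sum_eq_single (sel (s + 1)) hzero]
    set j := sel (s + 1) with hj
    have hUj : Uc j (s + 1) = Uc j s + v j (s + 1) := by
      rw [hstep j s, hu, if_pos hj]
    have hkey := key_ineq18 (Uc j s + ξ) (v j (s + 1)) Vmax (hden j s)
      (hv j (s + 1)).1 (hv j (s + 1)).2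
    have hgval : g (s + 1) = B j * (v j (s + 1) / (Uc j s + ξ)) := by
      rw [hg]
      simp only [Nat.add_sub_cancel, mul_div_assoc]; rfl
    rw [hgval]
    have hφd : φ j (s + 1) - φ j s =
        (Real.log ((Uc j s + ξ) + v j (s + 1)) - Real.log (Uc j s + ξ)) +
        (Vmax / (Uc j s + ξ) - Vmax / ((Uc j s + ξ) + v j (s + 1))) := by
      simp only [hφ, hUj]
      have : Uc j s + v j (s + 1) + ξ = Uc j s + ξ + v j (s + 1) := by ring
      rw [this]; ring
    rw [hφd]
    exact mul_le_mul_of_nonneg_left hkey (hB j).le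
  -- telescoping
  have tel : ∀ m : ℕ, ∑ τ ∈ Finset.Icc 1 m, (F τ - F (τ - 1)) = F m - F 0 := by
    intro m
    induction m with
    | zero => simp
    | succ k ih =>
        rw [Finset.sum_Icc_succ_top (Nat.succ_le_succ (Nat.zero_le k)), ih]
        simp only [Nat.add_sub_cancel]
        ring
  have hsum_g : ∑ τ ∈ Finset.Icc 1 t, g τ ≤ F t - F 0 := by
    rw [← tel t]
    apply Finset.sum_le_sum
    intro τ hτ
    obtain ⟨hτ1, _⟩ := Finset.mem_Icc.mp hτ
    obtain ⟨s, rfl⟩ : ∃ s, τ = s + 1 := ⟨τ - 1, (Nat.succ_pred_eq_of_pos hτ1).symm⟩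
    simpa using hround s
  -- per-round domination of competing allocation
  have hdom : ∀ τ ∈ Finset.Icc 1 t,
      (∑ i, B i * (x i τ * v i τ) / (Uc i t + ξ)) ≤ g τ := by
    intro τ hτ
    obtain ⟨hτ1, hτt⟩ := Finset.mem_Icc.mp hτ
    calc ∑ i, B i * (x i τ * v i τ) / (Uc i t + ξ)
        ≤ ∑ i, x i τ * g τ := by
          apply Finset.sum_le_sum
          intro i _
          have e : B i * (x i τ * v i τ) / (Uc i t + ξ) =
              x i τ * (B i * v i τ / (Uc i t + ξ)) := by ring
          rw [e]
          apply mul_le_mul_of_nonneg_left ?_ (hx i τ)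
          have h1 : B i * v i τ / (Uc i t + ξ) ≤ B i * v i τ / (Uc i (τ - 1) + ξ) := by
            apply div_le_div_of_nonneg_left (mul_nonneg (hB i).le (hv i τ).1)
              (hden i (τ - 1))
            have : Uc i (τ - 1) ≤ Uc i t := hmono i (τ - 1) t (le_trans (Nat.sub_le τ 1) hτt)
            linarith
          exact le_trans h1 (hsel τ hτ i)
      _ = (∑ i, x i τ) * g τ := (Finset.sum_mul _ _ _).symm
      _ ≤ 1 * g τ := mul_le_mul_of_nonneg_right (hfeas τ) (hg0 τ)
      _ = g τ := one_mul _
  -- main competing sum bound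
  have main1 : ∑ i, B i * ((∑ τ ∈ Finset.Icc 1 t, x i τ * v i τ) / (Uc i t + ξ)) ≤
      F t - F 0 := by
    calc ∑ i, B i * ((∑ τ ∈ Finset.Icc 1 t, x i τ * v i τ) / (Uc i t + ξ))
        = ∑ τ ∈ Finset.Icc 1 t, ∑ i, B i * (x i τ * v i τ) / (Uc i t + ξ) := by
          simp_rw [Finset.sum_div, Finset.mul_sum, mul_div_assoc]
          exact Finset.sum_comm
      _ ≤ ∑ τ ∈ Finset.Icc 1 t, g τ := Finset.sum_le_sum hdom
      _ ≤ F t - F 0 := hsum_g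
  -- bound on F t - F 0
  have hU0 : ∀ i, Uc i 0 = 0 := by intro i; rw [hU]; simp
  have hUcb : ∀ i, Uc i t ≤ t * Vmax := by
    intro i
    rw [hU]
    calc ∑ s ∈ Finset.Icc 1 t, u i s ≤ ∑ s ∈ Finset.Icc 1 t, Vmax :=
          Finset.sum_le_sum fun s _ => huV i s
      _ = t * Vmax := by rw [Finset.sum_const, Nat.card_Icc]; simp [nsmul_eq_mul]
  have ht1 : (1 : ℝ) ≤ (t : ℝ) := by exact_mod_cast ht
  have hlogi : ∀ i, Real.log ((Uc i t + ξ) / ξ) ≤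
      Real.log t + Real.log (1 + Vmax / ξ) := by
    intro i
    have h1 : (Uc i t + ξ) / ξ ≤ (t : ℝ) * (1 + Vmax / ξ) := by
      have e : (t : ℝ) * (1 + Vmax / ξ) = (t * ξ + t * Vmax) / ξ := by field_simp
      rw [e]
      apply div_le_div_of_nonneg_right ?_ hξ.le
      have := hUcb i
      nlinarith
    calc Real.log ((Uc i t + ξ) / ξ) ≤ Real.log ((t : ℝ) * (1 + Vmax / ξ)) := by
          apply Real.log_le_log (div_pos (hden i t) hξ) h1
      _ = Real.log t + Real.log (1 + Vmax / ξ) := by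
          rw [Real.log_mul (by positivity) (by positivity)]
  have hFt : F t - F 0 ≤ Real.log t + Real.log (1 + Vmax / ξ) + Vmax / ξ := by
    have hFd : F t - F 0 = ∑ i, B i * (φ i t - φ i 0) := by
      rw [hF]; simp only [← Finset.sum_sub_distrib, mul_sub]
    rw [hFd]
    calc ∑ i, B i * (φ i t - φ i 0)
        ≤ ∑ i, B i * (Real.log t + Real.log (1 + Vmax / ξ) + Vmax / ξ) := by
          apply Finset.sum_le_sum
          intro i _
          apply mul_le_mul_of_nonneg_left ?_ (hB i).le
          have hd : φ i t - φ i 0 =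
              (Real.log (Uc i t + ξ) - Real.log ξ) + (Vmax / ξ - Vmax / (Uc i t + ξ)) := by
            simp only [hφ, hU0 i]
            ring_nf
          rw [hd]
          have hld : Real.log (Uc i t + ξ) - Real.log ξ = Real.log ((Uc i t + ξ) / ξ) :=
            (Real.log_div (hden i t).ne' hξ.ne').symm
          have h2 : 0 ≤ Vmax / (Uc i t + ξ) := div_nonneg hV0 (hden i t).le
          have := hlogi i
          linarith [hld ▸ this]
      _ = Real.log t + Real.log (1 + Vmax / ξ) + Vmax / ξ := by
          rw [← Finset.sum_mul, hBsum, one_mul]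
  -- seed part
  have hseed : ∑ i, B i * (ξ / (Uc i t + ξ)) ≤ 1 := by
    calc ∑ i, B i * (ξ / (Uc i t + ξ)) ≤ ∑ i, B i * 1 := by
          apply Finset.sum_le_sum
          intro i _
          apply mul_le_mul_of_nonneg_left ?_ (hB i).le
          rw [div_le_one (hden i t)]
          linarith [hUc0 i t]
      _ = 1 := by simpa using hBsum
  -- assemble
  have hsplit : ∑ i, B i * ((∑ τ ∈ Finset.Icc 1 t, x i τ * v i τ + ξ) / (Uc i t + ξ)) =
      ∑ i, B i * ((∑ τ ∈ Finset.Icc 1 t, x i τ * v i τ) / (Uc i t + ξ)) +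
      ∑ i, B i * (ξ / (Uc i t + ξ)) := by
    rw [← Finset.sum_add_distrib]
    apply Finset.sum_congr rfl
    intro i _
    rw [add_div, mul_add]
  rw [hsplit]
  have hlogt : 0 ≤ Real.log t := Real.log_nonneg ht1
  have hlogV : 0 ≤ Real.log (1 + Vmax / ξ) := by
    apply Real.log_nonneg
    have : 0 ≤ Vmax / ξ := div_nonneg hV0 hξ.le
    linarith
  have hVξ : 0 ≤ Vmax / ξ := div_nonneg hV0 hξ.le
  have h4 : 4 * Vmax / ξ = 4 * (Vmax / ξ) := by ring
  rw [h4]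
  linarith [le_trans main1 hFt, hseed]
end
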